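/- arXiv:1507.07660 — 8 statements merged into one kernel-verified Lean document; each statement's English description precedes it below -/
import Mathlib

section
/- For every natural number n ≥ 1, twice the sum over k from 0 to n of T(n,k)·T(n,k+1) equals T(2n, 2n-1). -/
/-- The Motzkin triangle: `T n 0 = 1`, `T n k = 0` for `k < 0` or `k > n`,
and `T n k = T (n-1) (k-2) + T (n-1) (k-1) + T (n-1) k` for `n ≥ 1`, `1 ≤ k ≤ n`. -/
def motzkinT : ℕ → ℤ → ℤ
  | 0, k => if k = 0 then 1 else 0
  | n + 1, k =>
    if k < 0 ∨ ((n : ℤ) + 1) < k then 0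
    else if k = 0 then 1
    else motzkinT n (k - 2) + motzkinT n (k - 1) + motzkinT n k

/-- Number of paths of length `n` from height `a` to height `b` with steps `-1,0,1`
staying nonnegative. -/
def mP : ℕ → ℤ → ℤ → ℤ
  | 0, a, b => if a = b ∧ 0 ≤ a then 1 else 0
  | n + 1, a, b => if a < 0 ∨ b < 0 then 0 else mP n (a-1) b + mP n a b + mP n (a+1) b

lemma mP_neg_left (n : ℕ) (a b : ℤ) (h : a < 0) : mP n a b = 0 := by
  cases n with
  | zero => simp only [mP]; rw [if_neg (by omega)]
  | succ m => simp only [mP]; rw [if_pos (Or.inl h)]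

lemma mP_neg_right (n : ℕ) (a b : ℤ) (h : b < 0) : mP n a b = 0 := by
  cases n with
  | zero => simp only [mP]; rw [if_neg (by omega)]
  | succ m => simp only [mP]; rw [if_pos (Or.inr h)]

lemma mP_succ (n : ℕ) (a b : ℤ) (ha : 0 ≤ a) (hb : 0 ≤ b) :
    mP (n+1) a b = mP n (a-1) b + mP n a b + mP n (a+1) b := by
  simp only [mP]; rw [if_neg (by omega)]

lemma mP_big : ∀ (n : ℕ) (a b : ℤ), a + n < b → mP n a b = 0 := by
  intro n
  induction n with
  | zero => intro a b h; simp only [mP]; rw [if_neg (by omega)]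
  | succ m ih =>
    intro a b h
    by_cases ha : a < 0
    · exact mP_neg_left _ _ _ ha
    by_cases hb : b < 0
    · exact mP_neg_right _ _ _ hb
    rw [mP_succ m a b (by omega) (by omega)]
    rw [ih (a-1) b (by push_cast at h ⊢; omega), ih a b (by push_cast at h ⊢; omega),
      ih (a+1) b (by push_cast at h ⊢; omega)]
    ring

lemma mP_recR : ∀ (n : ℕ) (a b : ℤ), 0 ≤ b →
    mP (n+1) a b = mP n a (b-1) + mP n a b + mP n a (b+1) := by
  intro n
  induction n with
  | zero =>
    intro a b hb
    simp only [mP]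
    split_ifs <;> omega
  | succ m ih =>
    intro a b hb
    by_cases ha : a < 0
    · rw [mP_neg_left _ _ _ ha, mP_neg_left _ _ _ ha, mP_neg_left _ _ _ ha,
        mP_neg_left _ _ _ ha]; ring
    push_neg at ha
    have e0 : mP (m+1+1) a b = mP (m+1) (a-1) b + mP (m+1) a b + mP (m+1) (a+1) b :=
      mP_succ (m+1) a b ha hb
    have e1 := ih (a-1) b hb
    have e2 := ih a b hb
    have e3 := ih (a+1) b hb
    have f2 : mP (m+1) a b = mP m (a-1) b + mP m a b + mP m (a+1) b := mP_succ m a b ha hb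
    have g5 : mP (m+1) a (b+1) = mP m (a-1) (b+1) + mP m a (b+1) + mP m (a+1) (b+1) :=
      mP_succ m a (b+1) ha (by omega)
    rcases eq_or_lt_of_le hb with hb0 | hb1
    · have g1 : mP (m+1) a (b-1) = 0 := mP_neg_right _ _ _ (by omega)
      have g2 : mP m (a-1) (b-1) = 0 := mP_neg_right _ _ _ (by omega)
      have g3 : mP m a (b-1) = 0 := mP_neg_right _ _ _ (by omega)
      have g4 : mP m (a+1) (b-1) = 0 := mP_neg_right _ _ _ (by omega)
      linarith
    · have g1 : mP (m+1) a (b-1) = mP m (a-1) (b-1) + mP m a (b-1) + mP m (a+1) (b-1) :=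
        mP_succ m a (b-1) ha (by omega)
      linarith

lemma mP_symm : ∀ (n : ℕ) (a b : ℤ), mP n a b = mP n b a := by
  intro n
  induction n with
  | zero => intro a b; simp only [mP]; split_ifs <;> omega
  | succ m ih =>
    intro a b
    by_cases ha : a < 0
    · rw [mP_neg_left _ _ _ ha, mP_neg_right _ _ _ ha]
    by_cases hb : b < 0
    · rw [mP_neg_left _ _ _ hb, mP_neg_right _ _ _ hb]
    push_neg at ha hb
    rw [mP_succ m a b ha hb, mP_recR m b a ha, ih (a-1) b, ih a b, ih (a+1) b]

lemma mP_diag : ∀ (n : ℕ) (a : ℤ), 0 ≤ a → mP n a (a + n) = 1 := by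
  intro n
  induction n with
  | zero => intro a ha; simp only [mP]; rw [if_pos (by constructor <;> omega)]
  | succ m ih =>
    intro a ha
    rw [show (a + ((m+1 : ℕ) : ℤ)) = a + (m:ℤ) + 1 from by push_cast; ring]
    rw [mP_succ m a (a + (m:ℤ) + 1) ha (by omega)]
    rw [mP_big m (a-1) _ (by omega), mP_big m a _ (by omega)]
    have h := ih (a+1) (by omega)
    rw [show ((a+1) + (m:ℤ)) = a + (m:ℤ) + 1 from by ring] at h
    rw [h]
    ring

lemma mP_split : ∀ (m : ℕ) (N : ℕ) (n : ℕ) (a c : ℤ), a + m < N →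
    mP (m+n) a c = ∑ j ∈ Finset.range N, mP m a (j:ℤ) * mP n (j:ℤ) c := by
  intro m
  induction m with
  | zero =>
    intro N n a c h
    by_cases ha : a < 0
    · rw [Nat.zero_add, mP_neg_left n a c ha]
      symm
      apply Finset.sum_eq_zero
      intro j hj
      rw [show mP 0 a (j:ℤ) = 0 from by simp only [mP]; rw [if_neg (by omega)]]
      ring
    push_neg at ha
    rw [Nat.zero_add]
    rw [Finset.sum_eq_single_of_mem a.toNat
      (Finset.mem_range.mpr (by omega))]
    · rw [show ((a.toNat : ℤ)) = a from by omega]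
      rw [show mP 0 a a = 1 from by simp [mP, ha]]
      ring
    · intro j hj hne
      rw [show mP 0 a (j:ℤ) = 0 from by simp only [mP]; rw [if_neg (by omega)]]
      ring
  | succ m ih =>
    intro N n a c h
    by_cases ha : a < 0
    · rw [mP_neg_left _ _ _ ha]
      symm
      apply Finset.sum_eq_zero
      intro j hj
      rw [mP_neg_left _ _ _ ha]; ring
    by_cases hc : c < 0
    · rw [mP_neg_right _ _ _ hc]
      symm
      apply Finset.sum_eq_zero
      intro j hj
      rw [mP_neg_right _ _ _ hc]; ring
    push_neg at ha hc
    rw [show m+1+n = m+n+1 from by omega, mP_succ (m+n) a c ha hc]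
    rw [ih N n (a-1) c (by push_cast at h ⊢; omega),
        ih N n a c (by push_cast at h ⊢; omega),
        ih N n (a+1) c (by push_cast at h ⊢; omega)]
    rw [← Finset.sum_add_distrib, ← Finset.sum_add_distrib]
    apply Finset.sum_congr rfl
    intro j hj
    rw [mP_succ m a (j:ℤ) ha (by positivity)]
    ring

lemma mP_key : ∀ (n : ℕ) (j : ℤ), 0 ≤ j →
    mP n j 1 = mP n (j-1) 0 + mP n (j+1) 0 := by
  intro n
  induction n with
  | zero => intro j hj; simp only [mP]; split_ifs <;> omega
  | succ m ih =>
    intro j hj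
    have h1 : mP (m+1) j 1 = mP m (j-1) 1 + mP m j 1 + mP m (j+1) 1 :=
      mP_succ m j 1 hj (by omega)
    have h3 : mP m j 1 = mP m (j-1) 0 + mP m (j+1) 0 := ih j hj
    have h4 : mP m (j+1) 1 = mP m j 0 + mP m (j+2) 0 := by
      rw [ih (j+1) (by omega), show j+1-1 = j from by ring, show j+1+1 = j+2 from by ring]
    have h6 : mP (m+1) (j+1) 0 = mP m j 0 + mP m (j+1) 0 + mP m (j+2) 0 := by
      rw [mP_succ m (j+1) 0 (by omega) le_rfl, show j+1-1 = j from by ring,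
        show j+1+1 = j+2 from by ring]
    rcases eq_or_lt_of_le hj with hj0 | hj1
    · have h2 : mP m (j-1) 1 = 0 := mP_neg_left _ _ _ (by omega)
      have h5 : mP (m+1) (j-1) 0 = 0 := mP_neg_left _ _ _ (by omega)
      have h7 : mP m (j-1) 0 = 0 := mP_neg_left _ _ _ (by omega)
      linarith
    · have h2 : mP m (j-1) 1 = mP m (j-2) 0 + mP m j 0 := by
        rw [ih (j-1) (by omega), show j-1-1 = j-2 from by ring, show j-1+1 = j from by ring]
      have h5 : mP (m+1) (j-1) 0 = mP m (j-2) 0 + mP m (j-1) 0 + mP m j 0 := by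
        rw [mP_succ m (j-1) 0 (by omega) le_rfl, show j-1-1 = j-2 from by ring,
          show j-1+1 = j from by ring]
      linarith

lemma motzkinT_eq_mP : ∀ (n : ℕ) (k : ℤ), motzkinT n k = mP n 0 ((n:ℤ) - k) := by
  intro n
  induction n with
  | zero => intro k; simp only [motzkinT, mP]; split_ifs <;> omega
  | succ m ih =>
    intro k
    by_cases h1 : k < 0 ∨ ((m:ℤ)+1) < k
    · rw [show motzkinT (m+1) k = 0 from by rw [motzkinT]; rw [if_pos h1]]
      rcases h1 with h1 | h1
      · rw [mP_big (m+1) 0 _ (by push_cast; omega)]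
      · rw [mP_neg_right (m+1) 0 _ (by push_cast; omega)]
    push_neg at h1
    by_cases h2 : k = 0
    · subst h2
      rw [show motzkinT (m+1) 0 = 1 from by rw [motzkinT, if_neg (by omega), if_pos rfl]]
      have h := mP_diag (m+1) 0 le_rfl
      rw [show ((0:ℤ) + ((m+1 : ℕ) : ℤ)) = ((m+1 : ℕ) : ℤ) - 0 from by ring] at h
      exact h.symm
    · rw [show motzkinT (m+1) k = motzkinT m (k-2) + motzkinT m (k-1) + motzkinT m k from by
        rw [motzkinT]; rw [if_neg (by omega), if_neg h2]]
      rw [ih (k-2), ih (k-1), ih k]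
      rw [mP_recR m 0 (((m+1 : ℕ) : ℤ) - k) (by push_cast; omega)]
      rw [show (m:ℤ) - (k-2) = ((m+1 : ℕ) : ℤ) - k + 1 from by push_cast; ring,
          show (m:ℤ) - (k-1) = ((m+1 : ℕ) : ℤ) - k from by push_cast; ring,
          show (m:ℤ) - k = ((m+1 : ℕ) : ℤ) - k - 1 from by push_cast; ring]
      ring

theorem two_mul_motzkin_sum (n : ℕ) (hn : 1 ≤ n) :
    2 * ∑ k ∈ Finset.range (n + 1), motzkinT n k * motzkinT n ((k : ℤ) + 1) =
      motzkinT (2 * n) (2 * (n : ℤ) - 1) := by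
  have hA : ∀ k : ℤ, motzkinT n k = mP n 0 ((n:ℤ) - k) := motzkinT_eq_mP n
  -- RHS
  rw [motzkinT_eq_mP (2*n) (2*(n:ℤ) - 1)]
  rw [show ((2*n : ℕ) : ℤ) - (2*(n:ℤ) - 1) = 1 from by push_cast; ring]
  rw [show 2*n = n + n from by ring]
  rw [mP_split n (n+1) n 0 1 (by push_cast; omega)]
  -- rewrite RHS summand with the key identity and symmetry
  have hR : ∑ j ∈ Finset.range (n+1), mP n 0 (j:ℤ) * mP n (j:ℤ) 1
      = (∑ j ∈ Finset.range (n+1), mP n 0 (j:ℤ) * mP n 0 ((j:ℤ)-1))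
        + ∑ j ∈ Finset.range (n+1), mP n 0 (j:ℤ) * mP n 0 ((j:ℤ)+1) := by
    rw [← Finset.sum_add_distrib]
    apply Finset.sum_congr rfl
    intro j hj
    rw [mP_key n (j:ℤ) (by positivity), mP_symm n ((j:ℤ)-1) 0, mP_symm n ((j:ℤ)+1) 0]
    ring
  rw [hR]
  -- shift identity: the two sums are equal
  have hshift : ∑ j ∈ Finset.range (n+1), mP n 0 (j:ℤ) * mP n 0 ((j:ℤ)-1)
      = ∑ j ∈ Finset.range (n+1), mP n 0 (j:ℤ) * mP n 0 ((j:ℤ)+1) := by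
    rw [Finset.sum_range_succ' (fun j => mP n 0 (j:ℤ) * mP n 0 ((j:ℤ)-1)) n]
    rw [Finset.sum_range_succ (fun j => mP n 0 (j:ℤ) * mP n 0 ((j:ℤ)+1)) n]
    rw [show mP n 0 ((0:ℕ):ℤ) * mP n 0 (((0:ℕ):ℤ)-1) = 0 from by
      rw [mP_neg_right n 0 (((0:ℕ):ℤ)-1) (by norm_num)]; ring]
    rw [show mP n 0 ((n:ℤ)) * mP n 0 ((n:ℤ)+1) = 0 from by
      rw [mP_big n 0 ((n:ℤ)+1) (by omega)]; ring]
    rw [add_zero, add_zero]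
    apply Finset.sum_congr rfl
    intro j hj
    rw [show ((j+1:ℕ):ℤ) - 1 = (j:ℤ) from by push_cast; ring]
    rw [show ((j+1:ℕ):ℤ) = (j:ℤ)+1 from by push_cast; ring]
    ring
  rw [← hshift]
  -- LHS: rewrite via A and reflect the sum
  have hL : ∑ k ∈ Finset.range (n + 1), motzkinT n k * motzkinT n ((k : ℤ) + 1)
      = ∑ j ∈ Finset.range (n+1), mP n 0 (j:ℤ) * mP n 0 ((j:ℤ)-1) := by
    rw [← Finset.sum_range_reflect (fun j => mP n 0 (j:ℤ) * mP n 0 ((j:ℤ)-1)) (n+1)]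
    apply Finset.sum_congr rfl
    intro k hk
    have hkn : k ≤ n := by
      have := Finset.mem_range.mp hk; omega
    rw [hA (k:ℤ), hA ((k:ℤ)+1)]
    rw [show ((n + 1 - 1 - k : ℕ) : ℤ) = (n:ℤ) - k from by
      rw [show n + 1 - 1 - k = n - k from by omega]; push_cast [hkn]; ring]
    rw [show (n:ℤ) - ((k:ℤ)+1) = ((n:ℤ) - k) - 1 from by ring]
  rw [hL]
  ring
end

section
/- For every natural number n ≥ 1, the sum over k from 0 to n of C(2n, 2k+1)·C(2k+1, k)/(k+2), taken in the rational numbers, equals T(2n, 2n-1)/2. -/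
namespace MotzkinAux

open Finset
def mS (n h : ℕ) : ℤ := ∑ j ∈ Finset.range (n+1), ((n.choose (2*j+h)) * ((2*j+h).choose j) : ℤ)

lemma mS_ext (n h m : ℕ) (hm : n + 1 ≤ m) :
    mS n h = ∑ j ∈ Finset.range m, ((n.choose (2*j+h)) * ((2*j+h).choose j) : ℤ) := by
  apply Finset.sum_subset (Finset.range_subset_range.2 hm)
  intro j _ hj
  simp only [Finset.mem_range, not_lt] at hj
  have : n < 2*j+h := by omega
  simp [Nat.choose_eq_zero_of_lt this]

lemma mS_shift (n h : ℕ) :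
    mS n h = ∑ j ∈ Finset.range (n+1), ((n.choose (2*j+h+2)) * ((2*j+h+2).choose (j+1)) : ℤ)
      + (n.choose h : ℤ) := by
  rw [mS_ext n h (n+2) (by omega), Finset.sum_range_succ']
  congr 1
  · apply Finset.sum_congr rfl
    intro j _
    rw [show 2*(j+1)+h = 2*j+h+2 from by omega]
  · simp

lemma mS_rec1 (n h : ℕ) : mS (n+1) (h+1) = mS n h + mS n (h+1) + mS n (h+2) := by
  have e1 : mS (n+1) (h+1)
      = ∑ j ∈ Finset.range (n+2),
          ((n.choose (2*j+h) : ℤ) * ((2*j+h+1).choose j))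
        + ∑ j ∈ Finset.range (n+2), ((n.choose (2*j+h+1) : ℤ) * ((2*j+h+1).choose j)) := by
    rw [mS, ← Finset.sum_add_distrib]
    apply Finset.sum_congr rfl
    intro j _
    have : (n+1).choose (2*j+(h+1)) = n.choose (2*j+h) + n.choose (2*j+h+1) := by
      have := Nat.choose_succ_succ n (2*j+h)
      convert this using 2 <;> omega
    rw [this]
    have : (2*j+(h+1)) = (2*j+h+1) := by omega
    rw [this]
    push_cast
    ring_nf
  have e2 : ∑ j ∈ Finset.range (n+2), ((n.choose (2*j+h+1) : ℤ) * ((2*j+h+1).choose j))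
      = mS n (h+1) := by
    rw [mS_ext n (h+1) (n+2) (by omega)]
    apply Finset.sum_congr rfl; intro j _; congr 2 <;> omega
  have e3 : ∑ j ∈ Finset.range (n+2), ((n.choose (2*j+h) : ℤ) * ((2*j+h+1).choose j))
      = mS n h + mS n (h+2) := by
    rw [Finset.sum_range_succ']
    have step : ∀ j, ((n.choose (2*(j+1)+h) : ℤ) * ((2*(j+1)+h+1).choose (j+1)))
        = (n.choose (2*j+h+2) : ℤ) * ((2*j+h+2).choose j)
          + (n.choose (2*j+h+2) : ℤ) * ((2*j+h+2).choose (j+1)) := by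
      intro j
      rw [show 2*(j+1)+h = 2*j+h+2 from by omega, Nat.choose_succ_succ]
      push_cast; ring
    rw [Finset.sum_congr rfl (fun j _ => step j), Finset.sum_add_distrib]
    have p1 : ∑ j ∈ Finset.range (n+1), ((n.choose (2*j+h+2) : ℤ) * ((2*j+h+2).choose j))
        = mS n (h+2) := by
      rw [mS]
      apply Finset.sum_congr rfl; intro j _; congr 2 <;> omega
    have p2 := mS_shift n h
    rw [p1]
    have e0 : ((n.choose (2*0+h) : ℤ)) * (((2*0+h+1).choose 0 : ℕ) : ℤ) = (n.choose h : ℤ) := by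
      simp
    rw [e0]
    linarith [p2]
  rw [e1, e2, e3]; ring

lemma mS_shift0 (n : ℕ) :
    mS n 0 = ∑ j ∈ Finset.range (n+1), ((n.choose (2*j+2)) * ((2*j+2).choose (j+1)) : ℤ) + 1 := by
  have := mS_shift n 0
  simp only [Nat.choose_zero_right, Nat.cast_one] at this
  rw [this]

lemma mS_rec0 (n : ℕ) : mS (n+1) 0 = mS n 0 + 2 * mS n 1 := by
  rw [mS, Finset.sum_range_succ']
  have step : ∀ j, (((n+1).choose (2*(j+1)+0) : ℤ) * ((2*(j+1)+0).choose (j+1)))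
      = (n.choose (2*j+2) : ℤ) * ((2*j+2).choose (j+1))
        + 2 * ((n.choose (2*j+1) : ℤ) * ((2*j+1).choose j)) := by
    intro j
    have hp : (n+1).choose (2*(j+1)+0) = n.choose (2*j+1) + n.choose (2*j+2) := by
      have := Nat.choose_succ_succ n (2*j+1)
      convert this using 2 <;> omega
    have hc : (2*(j+1)+0).choose (j+1) = 2 * (2*j+1).choose j := by
      have h1 : (2*j+2).choose (j+1) = (2*j+1).choose j + (2*j+1).choose (j+1) :=
        Nat.choose_succ_succ (2*j+1) j
      have h2 : (2*j+1).choose (j+1) = (2*j+1).choose j := by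
        rw [← Nat.choose_symm (by omega : j+1 ≤ 2*j+1)]
        congr 1; omega
      rw [show 2*(j+1)+0 = 2*j+2 from by omega, h1, h2]; omega
    have hc' : (2*j+2).choose (j+1) = 2 * (2*j+1).choose j := by
      rw [show 2*j+2 = 2*(j+1)+0 from by omega]; exact hc
    rw [hp, hc, hc']
    push_cast; ring
  rw [Finset.sum_congr rfl (fun j _ => step j), Finset.sum_add_distrib]
  have p1 := mS_shift0 n
  have p2 : ∑ j ∈ Finset.range (n+1), 2 * ((n.choose (2*j+1) : ℤ) * ((2*j+1).choose j))
      = 2 * mS n 1 := by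
    rw [mS, Finset.mul_sum]
  have e0 : (((n+1).choose (2*0+0) : ℤ)) * (((2*0+0).choose 0 : ℕ) : ℤ) = 1 := by simp
  rw [e0, p2]
  linarith [p1]

def mF (n h : ℕ) : ℤ := mS n h - mS n (h+2)

lemma mS_vanish (n h : ℕ) (h1 : n < h) : mS n h = 0 := by
  apply Finset.sum_eq_zero
  intro j _
  have : n < 2*j+h := by omega
  simp [Nat.choose_eq_zero_of_lt this]

lemma mS_diag (n : ℕ) : mS n n = 1 := by
  rw [mS, Finset.sum_eq_single 0]
  · simp
  · intro j _ hj
    have : n < 2*j+n := by omega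
    simp [Nat.choose_eq_zero_of_lt this]
  · simp

lemma mF_vanish (n h : ℕ) (h1 : n < h) : mF n h = 0 := by
  rw [mF, mS_vanish n h h1, mS_vanish n (h+2) (by omega)]; ring

lemma mF_diag (n : ℕ) : mF n n = 1 := by
  rw [mF, mS_diag, mS_vanish n (n+2) (by omega)]; ring

lemma mF_rec1 (n h : ℕ) : mF (n+1) (h+1) = mF n h + mF n (h+1) + mF n (h+2) := by
  simp only [mF, mS_rec1]; ring

lemma mF_rec0 (n : ℕ) : mF (n+1) 0 = mF n 0 + mF n 1 := by
  simp only [mF, mS_rec0, mS_rec1]; ring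

lemma motzkinT_zero (n : ℕ) (k : ℤ) (hk : k < 0 ∨ (n : ℤ) < k) : motzkinT n k = 0 := by
  cases n with
  | zero =>
    rw [motzkinT]
    have : k ≠ 0 := by omega
    simp [this]
  | succ m =>
    rw [motzkinT]
    have : k < 0 ∨ ((m : ℤ) + 1) < k := by push_cast at hk ⊢; omega
    simp [this]

lemma motzkinT_eq_mF : ∀ (n : ℕ) (k : ℕ), k ≤ n → motzkinT n (k : ℤ) = mF n (n - k) := by
  intro n
  induction n with
  | zero =>
    intro k hk
    interval_cases k
    rw [motzkinT]
    simp [mF_diag]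
  | succ n ih =>
    intro k hk
    rw [motzkinT]
    have hnk : ¬((k : ℤ) < 0 ∨ ((n : ℤ) + 1) < (k : ℤ)) := by push_cast; omega
    rw [if_neg hnk]
    rcases Nat.eq_zero_or_pos k with rfl | hkpos
    · simp [Nat.sub_zero, mF_diag]
    · obtain ⟨k', rfl⟩ : ∃ k', k = k' + 1 := ⟨k - 1, by omega⟩
      have hne : ((k' : ℤ) + 1) ≠ 0 := by omega
      rw [if_neg (by exact_mod_cast hne)]
      have t2 : ((k' : ℤ) + 1) - 2 = (k' : ℤ) - 1 := by ring
      have t1 : ((k' : ℤ) + 1) - 1 = (k' : ℤ) := by ring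
      push_cast
      rw [t2, t1]
      -- first term: motzkinT n (k' - 1)
      have first : motzkinT n ((k' : ℤ) - 1) = mF n (n - k' + 1) := by
        rcases Nat.eq_zero_or_pos k' with rfl | hk'
        · rw [show ((0:ℕ):ℤ) - 1 = -1 from by norm_num,
            motzkinT_zero n (-1 : ℤ) (by norm_num), mF_vanish n (n - 0 + 1) (by omega)]
        · have : ((k' : ℤ) - 1) = ((k' - 1 : ℕ) : ℤ) := by push_cast [hk']; omega
          rw [this, ih (k'-1) (by omega)]
          congr 1; omega
      rcases Nat.lt_or_ge k' n with hlt | hge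
      · -- k' + 1 ≤ n : all in range, use mF_rec1 with h = n - k' - 1
        have second : motzkinT n (k' : ℤ) = mF n (n - k') := ih k' (by omega)
        have third : motzkinT n ((k' : ℤ) + 1) = mF n (n - (k'+1)) := by
          have : ((k' : ℤ) + 1) = ((k' + 1 : ℕ) : ℤ) := by push_cast; ring
          rw [this]; exact ih (k'+1) (by omega)
        rw [show n - (k'+1) = n - k' - 1 from by omega] at third
        rw [first, second, third]
        rw [show n - k' = (n - k' - 1) + 1 from by omega, mF_rec1]
        have e1 : n - k' - 1 + 1 = n - k' := by omega
        have e2 : n - k' - 1 + 2 = n - k' + 1 := by omega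
        rw [e1, e2]; ring
      · -- k' = n
        have hk'n : k' = n := by omega
        subst hk'n
        have second : motzkinT k' (k' : ℤ) = mF k' 0 := by
          have := ih k' le_rfl; simpa using this
        have third : motzkinT k' ((k' : ℤ) + 1) = 0 :=
          motzkinT_zero _ _ (by right; omega)
        rw [first, second, third]
        rw [show k' - k' = 0 from by omega, mF_rec0]
        norm_num
        ring

lemma catalanish (k : ℕ) : (((2*k+1).choose k : ℚ)) / (k+2)
    = (((2*k+1).choose k : ℚ) - ((2*k+1).choose (k+2) : ℚ)) / 2 := by
  have h1 : (2*k+1).choose (k+2) * (k+2) = (2*k+1).choose (k+1) * k := by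
    have := Nat.choose_succ_right_eq (2*k+1) (k+1)
    rw [this, show 2*k+1 - (k+1) = k from by omega]
  have h2 : (2*k+1).choose (k+1) = (2*k+1).choose k := by
    rw [← Nat.choose_symm (show k+1 ≤ 2*k+1 from by omega)]
    congr 1; omega
  rw [h2] at h1
  have key : ((2*k+1).choose (k+2) : ℚ) * (k+2) = ((2*k+1).choose k : ℚ) * k := by
    exact_mod_cast h1
  have hk2 : ((k : ℚ) + 2) ≠ 0 := by positivity
  field_simp
  linear_combination key


end MotzkinAux

open MotzkinAux in
theorem binomial_sum_eq_half_motzkin (n : ℕ) (hn : 1 ≤ n) :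
    ∑ k ∈ Finset.range (n + 1),
        (Nat.choose (2 * n) (2 * k + 1) * Nat.choose (2 * k + 1) k : ℚ) / (k + 2) =
      (motzkinT (2 * n) (2 * (n : ℤ) - 1) : ℚ) / 2 := by
  have hcast : (2 * (n : ℤ) - 1) = ((2*n - 1 : ℕ) : ℤ) := by
    push_cast [Nat.cast_sub (by omega : 1 ≤ 2*n)]; ring
  rw [hcast, motzkinT_eq_mF (2*n) (2*n-1) (by omega),
    show 2*n - (2*n-1) = 1 from by omega]
  have sumA : ∑ k ∈ Finset.range (n+1),
      (((2*n).choose (2*k+1) : ℤ) * ((2*k+1).choose k : ℤ)) = mS (2*n) 1 := by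
    rw [mS]
    apply Finset.sum_subset (Finset.range_subset_range.2 (by omega : n+1 ≤ 2*n+1))
    intro j _ hj
    simp only [Finset.mem_range, not_lt] at hj
    have : 2*n < 2*j+1 := by omega
    simp [Nat.choose_eq_zero_of_lt this]
  have sumB : ∑ k ∈ Finset.range (n+1),
      (((2*n).choose (2*k+1) : ℤ) * ((2*k+1).choose (k+2) : ℤ)) = mS (2*n) 3 := by
    rw [Finset.sum_range_succ']
    have f0 : (((2*n).choose (2*0+1) : ℤ) * ((2*0+1).choose (0+2) : ℤ)) = 0 := by
      norm_num
    rw [f0, add_zero]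
    have step : ∀ j, (((2*n).choose (2*(j+1)+1) : ℤ) * ((2*(j+1)+1).choose ((j+1)+2) : ℤ))
        = ((2*n).choose (2*j+3) : ℤ) * ((2*j+3).choose j : ℤ) := by
      intro j
      rw [show 2*(j+1)+1 = 2*j+3 from by omega, show (j+1)+2 = j+3 from rfl]
      congr 2
      rw [← Nat.choose_symm (show j+3 ≤ 2*j+3 from by omega)]
      congr 1; omega
    rw [Finset.sum_congr rfl (fun j _ => step j)]
    rw [mS]
    apply Finset.sum_subset (Finset.range_subset_range.2 (by omega : n ≤ 2*n+1))
    intro j _ hj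
    simp only [Finset.mem_range, not_lt] at hj
    have : 2*n < 2*j+3 := by omega
    simp [Nat.choose_eq_zero_of_lt this]
  have trans : ∀ k : ℕ, ((2*n).choose (2*k+1) * ((2*k+1).choose k) : ℚ) / (k+2)
      = (((2*n).choose (2*k+1) * ((2*k+1).choose k) : ℚ)
          - ((2*n).choose (2*k+1) * ((2*k+1).choose (k+2)) : ℚ)) / 2 := by
    intro k
    push_cast
    rw [mul_div_assoc, catalanish k]
    ring
  calc ∑ k ∈ Finset.range (n + 1),
        (Nat.choose (2 * n) (2 * k + 1) * Nat.choose (2 * k + 1) k : ℚ) / (k + 2)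
      = ∑ k ∈ Finset.range (n + 1),
        (((2*n).choose (2*k+1) * ((2*k+1).choose k) : ℚ)
          - ((2*n).choose (2*k+1) * ((2*k+1).choose (k+2)) : ℚ)) / 2 := by
        apply Finset.sum_congr rfl
        intro k _
        exact trans k
    _ = ((mS (2*n) 1 : ℚ) - (mS (2*n) 3 : ℚ)) / 2 := by
        rw [← Finset.sum_div, Finset.sum_sub_distrib]
        have cA := congrArg (fun z : ℤ => (z : ℚ)) sumA
        have cB := congrArg (fun z : ℤ => (z : ℚ)) sumB
        push_cast at cA cB
        rw [← cA, ← cB]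
    _ = ((mF (2*n) 1 : ℤ) : ℚ) / 2 := by
        rw [mF]
        push_cast
        ring
end

section
/- For all positive integers s and d, the sum over k from 0 to ⌊s/2⌋ of C(s+d-1, 2k+d-1)·C(2k+d-1, k)/(k+d), taken in the rational numbers, equals T(s+d-1, s)/d. -/
/-- Ballot number: paths with k down steps ending at height h. -/
def bb (k h : ℕ) : ℤ := (Nat.choose (2*k+h) k : ℤ) - Nat.choose (2*k+h) (k+h+1)

/-- Motzkin prefix count ending at height h after n steps. -/
def BB (n h : ℕ) : ℤ := ∑ k ∈ Finset.range (n+1), (Nat.choose n (2*k+h) : ℤ) * bb k h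

lemma bb_zero (h : ℕ) : bb 0 h = 1 := by
  simp [bb, Nat.choose_eq_zero_of_lt (show h < 0+h+1 by omega)]

lemma bb_P (k h : ℕ) : bb (k+1) (h+1) = bb (k+1) h + bb k (h+2) := by
  unfold bb
  have e1 : 2*(k+1)+(h+1) = (2*k+h+2)+1 := by ring
  have e2 : 2*(k+1)+h = 2*k+h+2 := by ring
  have e3 : 2*k+(h+2) = 2*k+h+2 := by ring
  have e4 : (k+1)+(h+1)+1 = (k+h+2)+1 := by ring
  have e5 : (k+1)+h+1 = k+h+2 := by ring
  have e6 : k+(h+2)+1 = k+h+3 := by ring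
  rw [e1, e2, e3, e4, e5, e6]
  rw [Nat.choose_succ_succ (2*k+h+2) k, Nat.choose_succ_succ (2*k+h+2) (k+h+2)]
  simp only [Nat.succ_eq_add_one]
  push_cast
  ring

lemma bb_Q (k : ℕ) : bb (k+1) 0 = bb k 1 := by
  unfold bb
  have e1 : 2*(k+1)+0 = (2*k+1)+1 := by ring
  have e2 : (k+1)+0+1 = (k+1)+1 := by ring
  have e3 : 2*k+1 = 2*k+1 := rfl
  rw [e1, e2]
  rw [Nat.choose_succ_succ (2*k+1) k, Nat.choose_succ_succ (2*k+1) (k+1)]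
  simp only [Nat.succ_eq_add_one]
  push_cast
  ring

lemma BB_ext (n h m : ℕ) (hm : n+1 ≤ m) :
    ∑ k ∈ Finset.range m, (Nat.choose n (2*k+h) : ℤ) * bb k h = BB n h := by
  rw [BB]
  symm
  apply Finset.sum_subset (Finset.range_subset_range.mpr hm)
  intro k _ hk
  simp only [Finset.mem_range, not_lt] at hk
  rw [Nat.choose_eq_zero_of_lt (by omega)]
  simp

lemma BB_high (n h : ℕ) (hh : n < h) : BB n h = 0 := by
  rw [BB]
  apply Finset.sum_eq_zero
  intro k _
  rw [Nat.choose_eq_zero_of_lt (by omega)]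
  simp

lemma BB_top (n : ℕ) : BB n n = 1 := by
  rw [BB, Finset.sum_range_succ']
  have : ∀ k ∈ Finset.range n, (Nat.choose n (2*(k+1)+n) : ℤ) * bb (k+1) n = 0 := by
    intro k _
    rw [Nat.choose_eq_zero_of_lt (by omega)]
    simp
  rw [Finset.sum_congr rfl this]
  simp [bb_zero]

lemma BB_rec1 (n h : ℕ) :
    BB (n+1) (h+1) = BB n h + BB n (h+1) + BB n (h+2) := by
  have key : ∀ k : ℕ, (Nat.choose (n+1) (2*k+(h+1)) : ℤ)
      = Nat.choose n (2*k+h) + Nat.choose n (2*k+(h+1)) := by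
    intro k
    rw [show 2*k+(h+1) = (2*k+h)+1 by ring, Nat.choose_succ_succ n (2*k+h)]
    push_cast; ring
  rw [BB]
  simp only [key, add_mul]
  rw [Finset.sum_add_distrib]
  have hA : ∑ k ∈ Finset.range (n+1+1), (Nat.choose n (2*k+(h+1)) : ℤ) * bb k (h+1)
      = BB n (h+1) := BB_ext n (h+1) (n+2) (by omega)
  rw [hA]
  have hB : ∑ k ∈ Finset.range (n+1+1), (Nat.choose n (2*k+h) : ℤ) * bb k (h+1)
      = BB n h + BB n (h+2) := by
    rw [Finset.sum_range_succ']
    have step : ∀ k : ℕ, (Nat.choose n (2*(k+1)+h) : ℤ) * bb (k+1) (h+1)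
        = (Nat.choose n (2*(k+1)+h) : ℤ) * bb (k+1) h
          + (Nat.choose n (2*k+(h+2)) : ℤ) * bb k (h+2) := by
      intro k
      rw [bb_P, show 2*k+(h+2) = 2*(k+1)+h by ring]
      ring
    rw [Finset.sum_congr rfl (fun k _ => step k), Finset.sum_add_distrib]
    have h2 : ∑ k ∈ Finset.range (n+1), (Nat.choose n (2*k+(h+2)) : ℤ) * bb k (h+2)
        = BB n (h+2) := BB_ext n (h+2) (n+1) le_rfl
    rw [h2]
    have h3 : (∑ k ∈ Finset.range (n+1), (Nat.choose n (2*(k+1)+h) : ℤ) * bb (k+1) h)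
        + (Nat.choose n (2*0+h) : ℤ) * bb 0 h
        = BB n h := by
      rw [← BB_ext n h (n+2) (by omega)]
      conv_rhs => rw [Finset.sum_range_succ']
    simp only [bb_zero, mul_one] at h3 ⊢
    linarith [h3]
  rw [hB]
  ring

lemma BB_rec0 (n : ℕ) : BB (n+1) 0 = BB n 0 + BB n 1 := by
  rw [BB, Finset.sum_range_succ']
  have key : ∀ k : ℕ, (Nat.choose (n+1) (2*(k+1)+0) : ℤ)
      = Nat.choose n (2*k+1) + Nat.choose n (2*(k+1)) := by
    intro k
    rw [show 2*(k+1)+0 = (2*k+1)+1 by ring, Nat.choose_succ_succ n (2*k+1)]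
    simp only [Nat.succ_eq_add_one]
    push_cast
    rw [show 2*k+1+1 = 2*(k+1) by ring]
  have step : ∀ k : ℕ, (Nat.choose (n+1) (2*(k+1)+0) : ℤ) * bb (k+1) 0
      = (Nat.choose n (2*k+1) : ℤ) * bb k 1 + (Nat.choose n (2*(k+1)+0) : ℤ) * bb (k+1) 0 := by
    intro k
    rw [key k, bb_Q, show 2*(k+1)+0 = 2*(k+1) by ring]
    ring
  rw [Finset.sum_congr rfl (fun k _ => step k), Finset.sum_add_distrib]
  have h1 : ∑ k ∈ Finset.range (n+1), (Nat.choose n (2*k+1) : ℤ) * bb k 1 = BB n 1 :=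
    BB_ext n 1 (n+1) le_rfl
  have h3 : (∑ k ∈ Finset.range (n+1), (Nat.choose n (2*(k+1)+0) : ℤ) * bb (k+1) 0)
      + (Nat.choose n (2*0+0) : ℤ) * bb 0 0
      = BB n 0 := by
    rw [← BB_ext n 0 (n+2) (by omega)]
    conv_rhs => rw [Finset.sum_range_succ']
  have hc : (Nat.choose (n+1) (2*0+0) : ℤ) * bb 0 0 = (Nat.choose n (2*0+0) : ℤ) * bb 0 0 := by
    simp
  rw [h1, hc]
  linarith [h3]

lemma motzkinT_zero : ∀ (n : ℕ) (k : ℤ), k < 0 ∨ (n : ℤ) < k → motzkinT n k = 0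
  | 0, k, hk => by
    have : k ≠ 0 := by omega
    simp [motzkinT, this]
  | n+1, k, hk => by
    have : k < 0 ∨ ((n:ℤ)+1) < k := by push_cast at hk; omega
    simp [motzkinT, this]

lemma motzkinT_val : ∀ (n j : ℕ), j ≤ n → motzkinT n (j:ℤ) = BB n (n - j)
  | 0, j, hj => by
    interval_cases j
    simp [motzkinT, BB, bb]
  | n+1, j, hj => by
    rcases Nat.eq_zero_or_pos j with rfl | hj1
    · rw [show ((0:ℕ):ℤ) = 0 by norm_num, show n+1-0 = n+1 from rfl, BB_top]
      have hg : ¬((0:ℤ) < 0 ∨ ((n:ℤ)+1) < 0) := by omega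
      rw [motzkinT, if_neg hg, if_pos rfl]
    · have hguard : ¬(((j:ℕ):ℤ) < 0 ∨ ((n:ℤ)+1) < ((j:ℕ):ℤ)) := by
        push_cast; omega
      have hne : ((j:ℕ):ℤ) ≠ 0 := by exact_mod_cast hj1.ne'
      have expand : motzkinT (n+1) (j:ℤ)
          = motzkinT n ((j:ℤ) - 2) + motzkinT n ((j:ℤ) - 1) + motzkinT n (j:ℤ) := by
        rw [motzkinT, if_neg hguard, if_neg hne]
      rw [expand]
      have t2 : motzkinT n ((j:ℤ)-1) = BB n (n-(j-1)) := by
        rw [show ((j:ℤ)-1) = ((j-1:ℕ):ℤ) by omega]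
        exact motzkinT_val n (j-1) (by omega)
      rcases eq_or_lt_of_le hj with hje | hjlt
      · -- j = n+1
        subst hje
        rw [show n+1-(n+1) = 0 by omega, BB_rec0]
        have t3 : motzkinT n ((n+1:ℕ):ℤ) = 0 :=
          motzkinT_zero n _ (Or.inr (by push_cast; omega))
        rw [t3, t2, show n-((n+1)-1) = 0 by omega]
        rcases Nat.eq_zero_or_pos n with rfl | hn
        · rw [show (((0:ℕ)+1:ℕ):ℤ)-2 = -1 by norm_num,
            motzkinT_zero 0 (-1) (Or.inl (by norm_num)),
            BB_high 0 1 (by omega)]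
          ring
        · have t1 : motzkinT n (((n+1:ℕ):ℤ)-2) = BB n (n-(n-1)) := by
            rw [show ((n+1:ℕ):ℤ)-2 = ((n-1:ℕ):ℤ) by omega]
            exact motzkinT_val n (n-1) (by omega)
          rw [t1, show n-(n-1) = 1 by omega]
          ring
      · -- j ≤ n
        have hjn : j ≤ n := by omega
        have t3 := motzkinT_val n j hjn
        rw [show n+1-j = (n-j)+1 by omega, BB_rec1 n (n-j)]
        rw [t2, t3, show n-(j-1) = (n-j)+1 by omega]
        rcases Nat.lt_or_ge j 2 with hj2 | hj2
        · have : j = 1 := by omega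
          subst this
          rw [show (((1:ℕ)):ℤ)-2 = -1 by norm_num,
            motzkinT_zero n (-1) (Or.inl (by norm_num)),
            show (n-1)+2 = n+1 by omega, BB_high n (n+1) (by omega)]
          ring
        · have t1 : motzkinT n ((j:ℤ)-2) = BB n (n-(j-2)) := by
            rw [show (j:ℤ)-2 = ((j-2:ℕ):ℤ) by omega]
            exact motzkinT_val n (j-2) (by omega)
          rw [t1, show n-(j-2) = (n-j)+2 by omega]
          ring

lemma ballot_key (k h : ℕ) : ((k:ℤ) + h + 1) * bb k h = (h+1) * Nat.choose (2*k+h) k := by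
  cases k with
  | zero => simp [bb_zero]
  | succ k' =>
    unfold bb
    have hsymm : Nat.choose (2*(k'+1)+h) ((k'+1)+h+1) = Nat.choose (2*(k'+1)+h) k' := by
      rw [← Nat.choose_symm (by omega : (k'+1)+h+1 ≤ 2*(k'+1)+h)]
      congr 1
      omega
    rw [hsymm]
    have hrec := Nat.choose_succ_right_eq (2*(k'+1)+h) k'
    rw [show 2*(k'+1)+h - k' = k'+h+2 by omega] at hrec
    have hrec' : (Nat.choose (2*(k'+1)+h) (k'+1) : ℤ) * (k'+1)
        = (Nat.choose (2*(k'+1)+h) k' : ℤ) * (k'+h+2) := by exact_mod_cast hrec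
    push_cast
    linear_combination hrec'

lemma BB_small (s h : ℕ) :
    ∑ k ∈ Finset.range (s/2+1), (Nat.choose (s+h) (2*k+h) : ℤ) * bb k h = BB (s+h) h := by
  rw [BB]
  apply Finset.sum_subset (Finset.range_subset_range.mpr (by omega))
  intro k _ hk
  simp only [Finset.mem_range, not_lt] at hk
  rw [Nat.choose_eq_zero_of_lt (by omega)]
  simp

theorem binomial_sum_eq_motzkin_div (s d : ℕ) (hs : 0 < s) (hd : 0 < d) :
    ∑ k ∈ Finset.range (s / 2 + 1),
        (Nat.choose (s + d - 1) (2 * k + d - 1) * Nat.choose (2 * k + d - 1) k : ℚ) / (k + d) =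
      (motzkinT (s + d - 1) (s : ℤ) : ℚ) / d := by
  obtain ⟨h, rfl⟩ : ∃ h, d = h + 1 := ⟨d - 1, by omega⟩
  have hM : motzkinT (s + (h+1) - 1) (s:ℤ) = BB (s+h) h := by
    rw [show s+(h+1)-1 = s+h by omega, motzkinT_val (s+h) s (by omega),
      show s+h-s = h by omega]
  rw [hM]
  have key : ∀ k ∈ Finset.range (s/2+1),
      (Nat.choose (s+(h+1)-1) (2*k+(h+1)-1) * Nat.choose (2*k+(h+1)-1) k : ℚ) / (k + (h+1:ℕ))
      = (((Nat.choose (s+h) (2*k+h) : ℤ) * bb k h : ℤ) : ℚ) / (h+1) := by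
    intro k _
    rw [show s+(h+1)-1 = s+h by omega, show 2*k+(h+1)-1 = 2*k+h by omega]
    have hbq : ((k:ℚ) + h + 1) * ((bb k h : ℤ) : ℚ) = (h+1) * Nat.choose (2*k+h) k := by
      exact_mod_cast ballot_key k h
    rw [div_eq_div_iff (by positivity) (by positivity)]
    push_cast
    linear_combination -(Nat.choose (s+h) (2*k+h) : ℚ) * hbq
  rw [Finset.sum_congr rfl key, ← Finset.sum_div]
  rw [show (((h:ℕ)+1:ℕ):ℚ) = ((h:ℚ)+1) by push_cast; ring]
  congr 1
  rw [← BB_small s h]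
  push_cast
  ring
end

section
/- Define the extended Motzkin triangle T'(n,k) for n ≥ 0 and 0 ≤ k ≤ 2n+2 by T'(n,k) = T(n,k) for 0 ≤ k ≤ n, T'(n,n+1) = 0, and T'(n,k) = -T(n, 2n+2-k) for n+2 ≤ k ≤ 2n+2. Then for every n, the polynomial identity ∑_{k=0}^{2n+2} T'(n,k)·x^k = (1 + x + x^2)^n · (1 - x^2) holds. -/
open Polynomial

/-- The extended Motzkin triangle on 0 ≤ k ≤ 2n+2: equals T(n,k) for k ≤ n,
0 at k = n+1, and -T(n, 2n+2-k) for n+2 ≤ k ≤ 2n+2. -/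
def motzkinT' (n k : ℕ) : ℤ :=
  if k ≤ n then motzkinT n k
  else if k = n + 1 then 0
  else -motzkinT n ((2 * n + 2 - k : ℕ) : ℤ)

lemma motzkinT_out (n : ℕ) (k : ℤ) (h : k < 0 ∨ (n:ℤ) < k) : motzkinT n k = 0 := by
  cases n with
  | zero =>
    have : k ≠ 0 := by omega
    simp [motzkinT, this]
  | succ m =>
    rw [motzkinT, if_pos (by push_cast at h ⊢; omega)]

lemma motzkinT_zero_left (n : ℕ) : motzkinT n 0 = 1 := by
  cases n with
  | zero => simp [motzkinT]
  | succ m =>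
    rw [motzkinT, if_neg (show ¬((0:ℤ) < 0 ∨ ((m:ℤ)+1) < 0) by omega), if_pos rfl]

lemma motzkinT_rec (n : ℕ) (k : ℤ) :
    motzkinT (n+1) k =
      motzkinT n (k-2) + motzkinT n (k-1) + motzkinT n k
        - (if k = (n:ℤ)+2 then motzkinT n n else 0) := by
  rw [motzkinT]
  by_cases h0 : k < 0 ∨ ((n:ℤ)+1) < k
  · rw [if_pos h0]
    by_cases hk : k = (n:ℤ)+2
    · rw [if_pos hk, show k - 2 = (n:ℤ) by omega,
          motzkinT_out n (k-1) (by omega), motzkinT_out n k (by omega)]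
      ring
    · rw [if_neg hk, motzkinT_out n (k-2) (by omega),
          motzkinT_out n (k-1) (by omega), motzkinT_out n k (by omega)]
      ring
  · rw [if_neg h0]
    have hk2 : k ≠ (n:ℤ)+2 := by omega
    rw [if_neg hk2]
    by_cases hk0 : k = 0
    · subst hk0
      rw [if_pos rfl, motzkinT_out n (0-2) (by omega),
          motzkinT_out n (0-1) (by omega), motzkinT_zero_left]
      ring
    · rw [if_neg hk0]; ring

def mg (n : ℕ) (k : ℤ) : ℤ := motzkinT n k - motzkinT n (2*(n:ℤ)+2-k)

lemma mg_out (n : ℕ) (k : ℤ) (h : k < 0 ∨ 2*(n:ℤ)+2 < k) : mg n k = 0 := by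
  unfold mg
  rw [motzkinT_out n k (by omega), motzkinT_out n (2*(n:ℤ)+2-k) (by omega)]
  ring

lemma mg_rec (n : ℕ) (k : ℤ) : mg (n+1) k = mg n k + mg n (k-1) + mg n (k-2) := by
  simp only [mg]
  push_cast
  rw [motzkinT_rec, motzkinT_rec]
  rw [show 2*((n:ℤ)+1)+2-k-2 = 2*(n:ℤ)+2-k by ring,
      show 2*((n:ℤ)+1)+2-k-1 = 2*(n:ℤ)+2-(k-1) by ring,
      show 2*((n:ℤ)+1)+2-k = 2*(n:ℤ)+2-(k-2) by ring]
  by_cases hk : k = (n:ℤ)+2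
  · rw [if_pos hk, if_pos (show 2*(n:ℤ)+2-(k-2) = (n:ℤ)+2 by omega)]
    ring
  · rw [if_neg hk, if_neg (show ¬(2*(n:ℤ)+2-(k-2) = (n:ℤ)+2) by omega)]
    ring

lemma mg_sum (n : ℕ) :
    ∑ k ∈ Finset.range (2*n+3), C (mg n k) * X ^ k
      = ((1 + X + X ^ 2 : ℤ[X]) ^ n) * (1 - X ^ 2) := by
  induction n with
  | zero =>
    rw [show 2*0+3 = 3 by norm_num]
    rw [Finset.sum_range_succ, Finset.sum_range_succ, Finset.sum_range_succ,
        Finset.sum_range_zero]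
    have h0 : mg 0 ((0:ℕ):ℤ) = 1 := by simp [mg, motzkinT]
    have h1 : mg 0 ((1:ℕ):ℤ) = 0 := by simp [mg, motzkinT]
    have h2 : mg 0 ((2:ℕ):ℤ) = -1 := by norm_num [mg, motzkinT]
    rw [h0, h1, h2]
    simp
    ring
  | succ m ih =>
    have key : ∀ k : ℕ, C (mg (m+1) (k:ℤ)) * X ^ k
        = C (mg m (k:ℤ)) * X ^ k + C (mg m ((k:ℤ)-1)) * X ^ k
          + C (mg m ((k:ℤ)-2)) * X ^ k := by
      intro k
      rw [mg_rec, map_add, map_add]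
      ring
    rw [show 2*(m+1)+3 = 2*m+5 by ring]
    rw [Finset.sum_congr rfl (fun k _ => key k), Finset.sum_add_distrib,
        Finset.sum_add_distrib]
    have hA : ∑ k ∈ Finset.range (2*m+5), C (mg m (k:ℤ)) * X ^ k
        = ∑ k ∈ Finset.range (2*m+3), C (mg m (k:ℤ)) * X ^ k := by
      refine (Finset.sum_subset (by intro x hx; simp at hx ⊢; omega) ?_).symm
      intro k _ hk
      simp only [Finset.mem_range, not_lt] at hk
      rw [mg_out m k (by omega), map_zero, zero_mul]
    have hB : ∑ k ∈ Finset.range (2*m+5), C (mg m ((k:ℤ)-1)) * X ^ k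
        = (∑ k ∈ Finset.range (2*m+3), C (mg m (k:ℤ)) * X ^ k) * X := by
      rw [show 2*m+5 = (2*m+4)+1 by ring, Finset.sum_range_succ']
      have e : ∀ i ∈ Finset.range (2*m+4), C (mg m (((i+1:ℕ):ℤ)-1)) * X ^ (i+1)
          = (C (mg m (i:ℤ)) * X ^ i) * X := by
        intro i _
        have h1 : ((i+1:ℕ):ℤ) - 1 = (i:ℤ) := by push_cast; ring
        rw [h1, pow_succ]
        ring
      rw [Finset.sum_congr rfl e]
      have hz : mg m (((0:ℕ):ℤ)-1) = 0 := mg_out m _ (by omega)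
      rw [hz, map_zero, zero_mul, add_zero, ← Finset.sum_mul]
      congr 1
      refine (Finset.sum_subset (by intro x hx; simp at hx ⊢; omega) ?_).symm
      intro k _ hk
      simp only [Finset.mem_range, not_lt] at hk
      rw [mg_out m k (by omega), map_zero, zero_mul]
    have hC : ∑ k ∈ Finset.range (2*m+5), C (mg m ((k:ℤ)-2)) * X ^ k
        = (∑ k ∈ Finset.range (2*m+3), C (mg m (k:ℤ)) * X ^ k) * X ^ 2 := by
      rw [show 2*m+5 = (2*m+4)+1 by ring, Finset.sum_range_succ',
          show 2*m+4 = (2*m+3)+1 by ring, Finset.sum_range_succ']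
      have e : ∀ i ∈ Finset.range (2*m+3), C (mg m (((i+1+1:ℕ):ℤ)-2)) * X ^ (i+1+1)
          = (C (mg m (i:ℤ)) * X ^ i) * X ^ 2 := by
        intro i _
        have h1 : ((i+1+1:ℕ):ℤ) - 2 = (i:ℤ) := by push_cast; ring
        rw [h1]
        ring
      rw [Finset.sum_congr rfl e]
      have hz0 : mg m (((0:ℕ):ℤ)-2) = 0 := mg_out m _ (by omega)
      have hz1 : mg m (((0+1:ℕ):ℤ)-2) = 0 := mg_out m _ (by omega)
      rw [hz0, hz1, map_zero, zero_mul, zero_mul, add_zero, add_zero, ← Finset.sum_mul]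
    rw [hA, hB, hC, ih]
    ring

lemma motzkinT'_eq_mg (n k : ℕ) (hk : k < 2*n+3) : motzkinT' n k = mg n (k:ℤ) := by
  unfold motzkinT' mg
  by_cases h1 : k ≤ n
  · rw [if_pos h1, motzkinT_out n (2*(n:ℤ)+2-(k:ℤ)) (by omega)]
    ring
  · rw [if_neg h1]
    by_cases h2 : k = n+1
    · rw [if_pos h2]
      have e : 2*(n:ℤ)+2-(k:ℤ) = (k:ℤ) := by omega
      rw [e]
      ring
    · rw [if_neg h2]
      have e : ((2*n+2-k : ℕ) : ℤ) = 2*(n:ℤ)+2-(k:ℤ) := by omega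
      rw [e, motzkinT_out n (k:ℤ) (by omega)]
      ring

theorem extended_motzkin_gen_fun (n : ℕ) :
    ∑ k ∈ Finset.range (2 * n + 3), C (motzkinT' n k) * X ^ k =
      ((1 + X + X ^ 2 : ℤ[X]) ^ n) * (1 - X ^ 2) := by
  rw [Finset.sum_congr rfl
      (fun k hk => by rw [motzkinT'_eq_mg n k (Finset.mem_range.mp hk)]),
    mg_sum]
end

section
/- Let c(n,k) denote the coefficient of x^k in the polynomial (1 + x + x^2)^n · (1 - x^2). Then for every natural number n, the sum over all integers k (equivalently, over k from 0 to 2n+2) of c(n,k)·c(n,k+1) equals c(2n, 2n+1) - c(2n, 2n+3). -/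
open Polynomial

noncomputable def motzkinC (n : ℕ) (k : ℤ) : ℤ :=
  if k < 0 then 0 else (((1 + X + X ^ 2 : ℤ[X]) ^ n) * (1 - X ^ 2)).coeff k.toNat

lemma trinomial_deg : (1 + X + X ^ 2 : ℤ[X]).natDegree ≤ 2 := by
  compute_degree

lemma binom_deg : (1 - X ^ 2 : ℤ[X]).natDegree ≤ 2 := by
  compute_degree

lemma P_deg (n : ℕ) : (((1 + X + X ^ 2 : ℤ[X]) ^ n) * (1 - X ^ 2)).natDegree ≤ 2 * n + 2 := by
  apply (natDegree_mul_le).trans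
  have h1 : ((1 + X + X ^ 2 : ℤ[X]) ^ n).natDegree ≤ 2 * n := by
    apply (natDegree_pow_le).trans
    have := trinomial_deg
    nlinarith
  have := binom_deg
  omega

lemma reflect_trinomial : reflect 2 (1 + X + X ^ 2 : ℤ[X]) = 1 + X + X ^ 2 := by
  have : (1 + X + X^2 : ℤ[X]) = X^0 + X^1 + X^2 := by ring
  rw [this, reflect_add, reflect_add, reflect_monomial, reflect_monomial, reflect_monomial]
  norm_num [revAt_le]
  ring

lemma reflect_binom : reflect 2 (1 - X ^ 2 : ℤ[X]) = -(1 - X ^ 2) := by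
  have : (1 - X^2 : ℤ[X]) = X^0 - X^2 := by ring
  rw [this, reflect_sub, reflect_monomial, reflect_monomial]
  norm_num [revAt_le]

lemma reflect_tri_pow (n : ℕ) : reflect (2 * n) ((1 + X + X ^ 2 : ℤ[X]) ^ n) = (1 + X + X ^ 2) ^ n := by
  induction n with
  | zero => simp
  | succ m ih =>
    have h2 : (2 * (m+1)) = 2 * m + 2 := by ring
    rw [pow_succ, h2, reflect_mul _ _ (natDegree_pow_le.trans (by have := trinomial_deg; nlinarith)) trinomial_deg,
      ih, reflect_trinomial]

lemma reflect_P (n : ℕ) : reflect (2 * n + 2) (((1 + X + X ^ 2 : ℤ[X]) ^ n) * (1 - X ^ 2))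
    = -(((1 + X + X ^ 2 : ℤ[X]) ^ n) * (1 - X ^ 2)) := by
  rw [reflect_mul _ _ (natDegree_pow_le.trans (by have := trinomial_deg; nlinarith)) binom_deg,
    reflect_tri_pow, reflect_binom]
  ring

lemma hmcgen (a m : ℕ) : motzkinC a m = (((1 + X + X ^ 2 : ℤ[X]) ^ a) * (1 - X ^ 2)).coeff m := by
  simp [motzkinC]

theorem coeff_convolution (n : ℕ) :
    ∑ k ∈ Finset.range (2 * n + 3), motzkinC n k * motzkinC n ((k : ℤ) + 1) =
      motzkinC (2 * n) (2 * (n : ℤ) + 1) - motzkinC (2 * n) (2 * (n : ℤ) + 3) := by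
  set P : ℤ[X] := ((1 + X + X ^ 2 : ℤ[X]) ^ n) * (1 - X ^ 2) with hP
  set Q : ℤ[X] := ((1 + X + X ^ 2 : ℤ[X]) ^ (2 * n)) * (1 - X ^ 2) with hQ
  -- convert motzkinC to coeffs
  have hmc : ∀ k : ℕ, motzkinC n k = P.coeff k := fun k => hmcgen n k
  have hmc1 : ∀ k : ℕ, motzkinC n ((k : ℤ) + 1) = P.coeff (k + 1) := by
    intro k
    have h1 : ((k : ℤ) + 1) = ((k + 1 : ℕ) : ℤ) := by push_cast; ring
    rw [h1, hmcgen]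
  have hR1 : motzkinC (2 * n) (2 * (n : ℤ) + 1) = Q.coeff (2 * n + 1) := by
    have h1 : (2 * (n : ℤ) + 1) = ((2 * n + 1 : ℕ) : ℤ) := by push_cast; ring
    rw [h1, hmcgen]
  have hR3 : motzkinC (2 * n) (2 * (n : ℤ) + 3) = Q.coeff (2 * n + 3) := by
    have h1 : (2 * (n : ℤ) + 3) = ((2 * n + 3 : ℕ) : ℤ) := by push_cast; ring
    rw [h1, hmcgen]
  -- antisymmetry of P
  have hrP : reflect (2 * n + 2) P = -P := by rw [hP]; exact reflect_P n
  have hA : ∀ i : ℕ, i ≤ 2 * n + 2 → P.coeff (2 * n + 2 - i) = -P.coeff i := by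
    intro i hi
    have := congrArg (fun p => Polynomial.coeff p i) hrP
    simpa [coeff_reflect, revAt_le hi] using this
  have hstep : ∀ k ∈ Finset.range (2 * n + 2),
      P.coeff k * P.coeff (k + 1) = -(P.coeff k * P.coeff (2 * n + 1 - k)) := by
    intro k hk
    rw [Finset.mem_range] at hk
    have hk1 : 2 * n + 1 - k ≤ 2 * n + 2 := by omega
    have := hA (2 * n + 1 - k) hk1
    have he : 2 * n + 2 - (2 * n + 1 - k) = k + 1 := by omega
    rw [he] at this
    rw [this]; ring
  -- the sum
  have hlast : P.coeff (2 * n + 3) = 0 := by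
    rw [hP]
    exact coeff_eq_zero_of_natDegree_lt ((P_deg n).trans_lt (by omega))
  have hsum : ∑ k ∈ Finset.range (2 * n + 3), motzkinC n k * motzkinC n ((k : ℤ) + 1)
      = -((P * P).coeff (2 * n + 1)) := by
    calc ∑ k ∈ Finset.range (2 * n + 3), motzkinC n k * motzkinC n ((k : ℤ) + 1)
        = ∑ k ∈ Finset.range (2 * n + 3), P.coeff k * P.coeff (k + 1) := by
          refine Finset.sum_congr rfl fun k _ => ?_; rw [hmc, hmc1]
      _ = ∑ k ∈ Finset.range (2 * n + 2), P.coeff k * P.coeff (k + 1) := by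
          rw [Finset.sum_range_succ]
          have h3 : 2 * n + 2 + 1 = 2 * n + 3 := by omega
          rw [h3, hlast, mul_zero, add_zero]
      _ = ∑ k ∈ Finset.range (2 * n + 2), -(P.coeff k * P.coeff (2 * n + 1 - k)) :=
          Finset.sum_congr rfl hstep
      _ = -∑ k ∈ Finset.range (2 * n + 2), P.coeff k * P.coeff (2 * n + 1 - k) := by
          rw [Finset.sum_neg_distrib]
      _ = -((P * P).coeff (2 * n + 1)) := by
          rw [coeff_mul, Finset.Nat.sum_antidiagonal_eq_sum_range_succ_mk]
  -- palindromicity of P * P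
  have h1 : P.natDegree ≤ 2 * n + 2 := hP ▸ P_deg n
  have hPP : reflect (4 * n + 4) (P * P) = P * P := by
    have h2 : 4 * n + 4 = (2 * n + 2) + (2 * n + 2) := by omega
    rw [h2, reflect_mul P P h1 h1, hrP, neg_mul_neg]
  have hco : (P * P).coeff (2 * n + 1) = (P * P).coeff (2 * n + 3) := by
    have := congrArg (fun p => Polynomial.coeff p (2 * n + 3)) hPP
    have hle : 2 * n + 3 ≤ 4 * n + 4 := by omega
    have he : 4 * n + 4 - (2 * n + 3) = 2 * n + 1 := by omega
    simpa [coeff_reflect, revAt_le hle, he] using this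
  have hQQ : P * P = Q * (1 - X ^ 2) := by
    rw [hP, hQ, two_mul, pow_add]; ring
  have hcoQ : (Q * (1 - X ^ 2)).coeff (2 * n + 3) = Q.coeff (2 * n + 3) - Q.coeff (2 * n + 1) := by
    rw [mul_sub, mul_one, coeff_sub]
    congr 1
    have he : 2 * n + 3 = 2 * n + 1 + 2 := by omega
    rw [he, coeff_mul_X_pow]
  rw [hsum, hR1, hR3, hco, hQQ, hcoQ]
  ring
end

section
/- Let d be an even positive integer and let P(x) = ∑_{j=0}^{d} a_j x^j be a polynomial with rational coefficients satisfying the palindromic condition a_j = a_{d-j} for all 0 ≤ j ≤ d. For n ≥ 0 and integer k, let A(n,k) denote the coefficient of x^k in P(x)^n · (1 - x^2). Then for every natural number n ≥ 1, twice the sum over k from 0 to dn/2 of A(n,k)·A(n,k+1) equals A(2n, dn-1). -/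
open Polynomial

/-!
Write `Q = P ^ n * (1 - X ^ 2)` and `R = P ^ (2 * n) * (1 - X ^ 2)`, and `m = d * n = 2 * t`.
Since `P` is palindromic of degree `d`, reversing `Q` with respect to degree `m + 2` (and `R`
with respect to `2 * m + 2`) changes its sign. For `Q` this gives `Q_(m+1-i) = -Q_(i+1)`, so the
coefficient of `X ^ (m + 1)` in `Q ^ 2` is `-∑_(i ≤ m+1) Q_i Q_(i+1)`, a sum invariant under
`i ↦ m + 1 - i`, hence equal to `-2 ∑_(i ≤ t) Q_i Q_(i+1)`. For `R` it forces the middle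
coefficient `R_(m+1)` to vanish, so reading off `X ^ (m + 1)` in `Q ^ 2 = R - X ^ 2 * R` leaves
`-R_(m-1)`.
-/

theorem Finset.sum_range_two_mul_of_symm {M : Type*} [AddCommMonoid M] (g : ℕ → M) (N : ℕ)
    (hg : ∀ i < N, g (2 * N - 1 - i) = g i) :
    ∑ i ∈ range (2 * N), g i = 2 • ∑ i ∈ range N, g i := by
  rw [two_mul, sum_range_add, two_nsmul, ← sum_range_reflect (fun i ↦ g (N + i))]
  congr 1
  refine sum_congr rfl fun i hi ↦ ?_
  have hi := mem_range.mp hi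
  rw [← hg i hi]
  congr 1
  omega

namespace Polynomial

variable {R : Type*}

theorem natDegree_sum_C_mul_X_pow_le [Semiring R] (a : ℕ → R) (d : ℕ) :
    (∑ j ∈ Finset.range (d + 1), C (a j) * X ^ j).natDegree ≤ d :=
  natDegree_sum_le_of_forall_le _ _ fun _ hj ↦
    (natDegree_C_mul_X_pow_le _ _).trans (Nat.lt_succ_iff.mp (Finset.mem_range.mp hj))

theorem reflect_sum_C_mul_X_pow [Semiring R] {a : ℕ → R} {d : ℕ}
    (hpal : ∀ j ≤ d, a j = a (d - j)) :
    reflect d (∑ j ∈ Finset.range (d + 1), C (a j) * X ^ j) =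
      ∑ j ∈ Finset.range (d + 1), C (a j) * X ^ j := by
  ext k
  simp only [coeff_reflect, finsetSum_coeff, coeff_C_mul_X_pow, Finset.sum_ite_eq,
    Finset.mem_range, Nat.lt_succ_iff]
  rcases le_or_gt k d with hk | hk
  · rw [revAt_le hk, if_pos (Nat.sub_le d k), if_pos hk, hpal k hk]
  · rw [revAt_eq_self_of_lt hk]

theorem reflect_pow_of_natDegree_le [CommSemiring R] {p : R[X]} {N : ℕ} (hp : p.natDegree ≤ N)
    (n : ℕ) : reflect (N * n) (p ^ n) = reflect N p ^ n := by
  induction n with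
  | zero => simp [reflect_one]
  | succ n ih =>
    rw [pow_succ, Nat.mul_succ,
      reflect_mul _ _ ((natDegree_pow_le_of_le n hp).trans_eq (mul_comm _ _)) hp, ih, pow_succ]

theorem reflect_pow_mul_one_sub_X_sq [CommRing R] {p : R[X]} {N : ℕ} (hp : p.natDegree ≤ N)
    (hpal : reflect N p = p) (n : ℕ) :
    reflect (N * n + 2) (p ^ n * (1 - X ^ 2)) = -(p ^ n * (1 - X ^ 2)) := by
  have h2 : (1 - X ^ 2 : R[X]).natDegree ≤ 2 :=
    natDegree_sub_le_of_le (natDegree_one.trans_le (Nat.zero_le 2)) (natDegree_X_pow_le 2)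
  rw [reflect_mul _ _ ((natDegree_pow_le_of_le n hp).trans_eq (mul_comm _ _)) h2,
    reflect_pow_of_natDegree_le hp, hpal, reflect_sub, reflect_one, reflect_monomial,
    revAt_le le_rfl]
  ring

section Ring

variable [Ring R] {f : R[X]}

theorem coeff_sub_eq_neg_of_reflect_eq_neg {N k : ℕ} (hf : reflect N f = -f) (hk : k ≤ N) :
    f.coeff (N - k) = -f.coeff k := by
  rw [← revAt_le hk, ← coeff_reflect, hf, coeff_neg]

theorem coeff_eq_zero_of_reflect_two_mul_eq_neg [IsAddTorsionFree R] {M : ℕ}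
    (hf : reflect (2 * M) f = -f) : f.coeff M = 0 := by
  have h := coeff_sub_eq_neg_of_reflect_eq_neg hf (k := M) (by omega)
  rwa [two_mul, Nat.add_sub_cancel, self_eq_neg] at h

end Ring

theorem coeff_mul_self_of_reflect_eq_neg [CommRing R] {f : R[X]} {t : ℕ}
    (hf : reflect (2 * t + 2) f = -f) :
    (f * f).coeff (2 * t + 1) =
      -(2 * ∑ i ∈ Finset.range (t + 1), f.coeff i * f.coeff (i + 1)) := by
  have hrefl : ∀ i ≤ 2 * t + 1, f.coeff (2 * t + 1 - i) = -f.coeff (i + 1) := fun i hi ↦ by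
    rw [← coeff_sub_eq_neg_of_reflect_eq_neg hf (by omega : i + 1 ≤ 2 * t + 2)]
    congr 1
    omega
  have hfold := Finset.sum_range_two_mul_of_symm (fun i ↦ f.coeff i * f.coeff (i + 1)) (t + 1)
    fun i hi ↦ by
      rw [show 2 * (t + 1) - 1 - i = 2 * t + 1 - i by omega, hrefl i (by omega),
        show 2 * t + 1 - i + 1 = 2 * t + 2 - i by omega,
        coeff_sub_eq_neg_of_reflect_eq_neg hf (by omega), neg_mul_neg, mul_comm]
  rw [nsmul_eq_mul, Nat.cast_ofNat] at hfold
  rw [coeff_mul, Finset.Nat.sum_antidiagonal_eq_sum_range_succ (fun i j ↦ f.coeff i * f.coeff j),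
    ← hfold, ← Finset.sum_neg_distrib]
  refine Finset.sum_congr (by congr 1) fun i hi ↦ ?_
  rw [hrefl i (by rw [Finset.mem_range] at hi; omega), mul_neg]

end Polynomial

theorem general_triangle_sum_general (d : ℕ) (hd_even : Even d) (a : ℕ → ℚ)
    (hpal : ∀ j ≤ d, a j = a (d - j))
    (P : ℚ[X]) (hP : P = ∑ j ∈ Finset.range (d + 1), C (a j) * X ^ j)
    (A : ℕ → ℤ → ℚ)
    (hA : ∀ (n : ℕ) (k : ℤ),
      A n k = if k < 0 then 0 else (P ^ n * (1 - X ^ 2)).coeff k.toNat) :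
    ∀ n : ℕ, 1 ≤ n →
      2 * ∑ k ∈ Finset.range (d * n / 2 + 1), A n k * A n ((k : ℤ) + 1) =
        A (2 * n) ((d : ℤ) * n - 1) := by
  intro n _
  obtain ⟨t, ht⟩ : Even (d * n) := hd_even.mul_right n
  have hPdeg : P.natDegree ≤ d := hP ▸ natDegree_sum_C_mul_X_pow_le a d
  have hPpal : reflect d P = P := hP ▸ reflect_sum_C_mul_X_pow hpal
  have hQ := reflect_pow_mul_one_sub_X_sq hPdeg hPpal n
  rw [ht, ← two_mul] at hQ
  have hR := reflect_pow_mul_one_sub_X_sq hPdeg hPpal (2 * n)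
  rw [show d * (2 * n) + 2 = 2 * (2 * t + 1) by rw [mul_left_comm, ht]; ring] at hR
  have key := coeff_mul_self_of_reflect_eq_neg hQ
  rw [show P ^ n * (1 - X ^ 2) * (P ^ n * (1 - X ^ 2)) =
      P ^ (2 * n) * (1 - X ^ 2) - X ^ 2 * (P ^ (2 * n) * (1 - X ^ 2)) by ring,
    coeff_sub, coeff_eq_zero_of_reflect_two_mul_eq_neg hR, zero_sub, neg_inj] at key
  have hA_nat : ∀ N (k : ℕ), A N k = (P ^ N * (1 - X ^ 2)).coeff k := fun N k ↦ by
    simp [hA]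
  have hA_shift : ∀ N (k : ℕ), A N (k - 2) = (X ^ 2 * (P ^ N * (1 - X ^ 2))).coeff k :=
    fun N k ↦ by
      rw [hA, coeff_X_pow_mul']
      split_ifs <;> first | omega | rfl | congr 1; omega
  have hdn : (d : ℤ) * n = t + t := by exact_mod_cast ht
  rw [show d * n / 2 = t by omega,
    show (d : ℤ) * n - 1 = ((2 * t + 1 : ℕ) : ℤ) - 2 by push_cast; omega, hA_shift, key]
  simp only [← Nat.cast_succ, hA_nat]

theorem general_triangle_sum (d : ℕ) (hd_even : Even d) (hd_pos : 0 < d) (a : ℕ → ℚ)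
    (hpal : ∀ j ≤ d, a j = a (d - j))
    (P : ℚ[X]) (hP : P = ∑ j ∈ Finset.range (d + 1), C (a j) * X ^ j)
    (A : ℕ → ℤ → ℚ)
    (hA : ∀ (n : ℕ) (k : ℤ),
      A n k = if k < 0 then 0 else (P ^ n * (1 - X ^ 2)).coeff k.toNat) :
    ∀ n : ℕ, 1 ≤ n →
      2 * ∑ k ∈ Finset.range (d * n / 2 + 1), A n k * A n ((k : ℤ) + 1) =
        A (2 * n) ((d : ℤ) * n - 1) :=
  general_triangle_sum_general d hd_even a hpal P hP A hA
end

section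
/- For all positive integers s and d, the difference ∑_{k≥0} C(s+d-1, 2k+d-1)·C(2k+d-1, k) − ∑_{k≥0} C(s+d-1, 2k+d+1)·C(2k+d+1, k), computed in the rational numbers, equals d·∑_{k≥0} C(s+d-1, 2k+d-1)·C(2k+d-1, k)/(k+d). (All sums are finite since the binomial coefficients vanish for large k.) -/
/-! Write `f k` and `g k` for the summands of the two sums on the left. Since
`2 (k + 1) + d - 1 = 2 k + d + 1`, the shifted term `g k` is `f (k + 1)` with `C(m, k + 1)` replaced
by `C(m, k)`, where `m = 2 k + d + 1`, and the ballot-number identity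
`C(m, k + 1) - C(m, k) = d / (k + 1 + d) · C(m, k + 1)` gives
`f (k + 1) - g k = d · f (k + 1) / (k + 1 + d)`. Together with `f 0 = d · f 0 / d` this matches the
two sides term by term. -/

open Finset

theorem Nat.cast_sub_mul_choose_succ_sub_choose {R : Type*} [CommRing R] (n k : ℕ) :
    ((n : R) - k) * (n.choose (k + 1) - n.choose k) = ((n : R) - 2 * k - 1) * n.choose (k + 1) := by
  rcases le_or_gt k n with hk | hk
  · have h := congrArg (Nat.cast : ℕ → R) (Nat.choose_succ_right_eq n k)
    push_cast [hk] at h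
    linear_combination h
  · simp [Nat.choose_eq_zero_of_lt hk, Nat.choose_eq_zero_of_lt (Nat.lt_succ_of_lt hk)]

theorem finsum_eq_sum_range_of_eq_zero {M : Type*} [AddCommMonoid M] {f : ℕ → M} {N : ℕ}
    (hf : ∀ k, N ≤ k → f k = 0) : ∑ᶠ k, f k = ∑ k ∈ range N, f k :=
  finsum_eq_sum_of_support_subset f fun k hk => by
    simpa using not_le.mp (mt (hf k) hk)

theorem choose_mul_choose_succ_sub_eq_mul_div (n d k : ℕ) :
    (n.choose (2 * (k + 1) + d - 1) * (2 * (k + 1) + d - 1).choose (k + 1) : ℚ) -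
        n.choose (2 * k + d + 1) * (2 * k + d + 1).choose k =
      d * (n.choose (2 * (k + 1) + d - 1) * (2 * (k + 1) + d - 1).choose (k + 1) / (↑(k + 1) + d)) := by
  have hm : 2 * (k + 1) + d - 1 = 2 * k + d + 1 := by omega
  have h := Nat.cast_sub_mul_choose_succ_sub_choose (R := ℚ) (2 * k + d + 1) k
  rw [hm]
  push_cast at h ⊢
  field_simp
  linear_combination (n.choose (2 * k + d + 1) : ℚ) * h

theorem binomial_difference_identity_general_general (s d : ℕ) (hd : 0 < d) :
    (∑ᶠ k : ℕ, (Nat.choose (s + d - 1) (2 * k + d - 1) * Nat.choose (2 * k + d - 1) k : ℚ)) -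
        ∑ᶠ k : ℕ, (Nat.choose (s + d - 1) (2 * k + d + 1) * Nat.choose (2 * k + d + 1) k : ℚ) =
      (d : ℚ) * ∑ᶠ k : ℕ,
        (Nat.choose (s + d - 1) (2 * k + d - 1) * Nat.choose (2 * k + d - 1) k : ℚ) / (k + d) := by
  rw [finsum_eq_sum_range_of_eq_zero (N := s + 2) fun k hk => by
      rw [Nat.choose_eq_zero_of_lt (by omega : s + d - 1 < 2 * k + d - 1)]; simp,
    finsum_eq_sum_range_of_eq_zero (N := s + 1) fun k hk => by
      rw [Nat.choose_eq_zero_of_lt (by omega : s + d - 1 < 2 * k + d + 1)]; simp,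
    finsum_eq_sum_range_of_eq_zero (N := s + 2) fun k hk => by
      rw [Nat.choose_eq_zero_of_lt (by omega : s + d - 1 < 2 * k + d - 1)]; simp,
    sum_range_succ' _ (s + 1), sum_range_succ' _ (s + 1), mul_add, mul_sum, add_sub_right_comm,
    ← sum_sub_distrib]
  congr 1
  · exact sum_congr rfl fun k _ => choose_mul_choose_succ_sub_eq_mul_div _ d k
  · rw [Nat.cast_zero, zero_add, mul_div_cancel₀ _ (by positivity)]

theorem binomial_difference_identity_general (s d : ℕ) (hs : 0 < s) (hd : 0 < d) :
    (∑ᶠ k : ℕ, (Nat.choose (s + d - 1) (2 * k + d - 1) * Nat.choose (2 * k + d - 1) k : ℚ)) -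
        ∑ᶠ k : ℕ, (Nat.choose (s + d - 1) (2 * k + d + 1) * Nat.choose (2 * k + d + 1) k : ℚ) =
      (d : ℚ) * ∑ᶠ k : ℕ,
        (Nat.choose (s + d - 1) (2 * k + d - 1) * Nat.choose (2 * k + d - 1) k : ℚ) / (k + d) :=
  binomial_difference_identity_general_general s d hd
end

section
/- For every natural number n ≥ 1, T(2n, 2n-1) equals the coefficient of x^{2n-1} in (1 + x + x^2)^{2n} minus the coefficient of x^{2n-3} in (1 + x + x^2)^{2n}. -/
open Polynomial

/-- The coefficient of x^k (integer k) in an integer polynomial; 0 for negative k. -/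
noncomputable def coeffZ (p : ℤ[X]) (k : ℤ) : ℤ :=
  if k < 0 then 0 else p.coeff k.toNat

/-- Trinomial coefficients. -/
def tri : ℕ → ℤ → ℤ
  | 0, k => if k = 0 then 1 else 0
  | n + 1, k => tri n (k - 2) + tri n (k - 1) + tri n k

lemma tri_neg : ∀ (n : ℕ) (k : ℤ), k < 0 → tri n k = 0
  | 0, k, hk => by simp [tri, hk.ne]
  | n + 1, k, hk => by
    simp [tri, tri_neg n (k - 2) (by omega), tri_neg n (k - 1) (by omega), tri_neg n k hk]

lemma tri_zero : ∀ n : ℕ, tri n 0 = 1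
  | 0 => rfl
  | n + 1 => by
    show tri n (0 - 2) + tri n (0 - 1) + tri n 0 = 1
    rw [tri_neg n (0 - 2) (by omega), tri_neg n (0 - 1) (by omega), tri_zero n]
    norm_num

lemma tri_symm : ∀ (n : ℕ) (k : ℤ), tri n (2 * n - k) = tri n k
  | 0, k => by
    simp only [tri, Nat.cast_zero]
    by_cases h : k = 0 <;> simp_all <;> omega
  | n + 1, k => by
    show tri n _ + tri n _ + tri n _ = tri n _ + tri n _ + tri n _
    have e2 : (2 * ((n : ℤ) + 1) - k - 2) = 2 * n - k := by push_cast; ring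
    have e1 : (2 * ((n : ℤ) + 1) - k - 1) = 2 * n - (k - 1) := by push_cast; ring
    have e0 : (2 * ((n : ℤ) + 1) - k) = 2 * n - (k - 2) := by push_cast; ring
    push_cast
    rw [e2, e1, e0, tri_symm n k, tri_symm n (k - 1), tri_symm n (k - 2)]
    ring

lemma coeffZ_mul_p (q : ℤ[X]) (k : ℤ) (hk : 0 ≤ k) :
    coeffZ (q * (1 + X + X ^ 2)) k = coeffZ q k + coeffZ q (k - 1) + coeffZ q (k - 2) := by
  have hm : q * (1 + X + X ^ 2) = q + q * X ^ 1 + q * X ^ 2 := by ring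
  unfold coeffZ
  rw [hm]
  simp only [coeff_add, coeff_mul_X_pow']
  rcases lt_trichotomy k 1 with h | h | h
  · have hk0 : k = 0 := by omega
    subst hk0
    norm_num
  · subst h
    norm_num
  · have h1 : ¬ (k < 0) := by omega
    have h2 : ¬ (k - 1 < 0) := by omega
    have h3 : ¬ (k - 2 < 0) ∨ (k - 2 < 0) := by omega
    rcases lt_trichotomy k 2 with h' | h' | h' <;>
    · simp only [if_neg h1, if_neg h2]
      rcases Int.lt_or_le (k - 2) 0 with hc | hc
      · rw [if_pos hc]
        have : k.toNat = 1 := by omega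
        simp [this]
      · rw [if_neg (not_lt.mpr hc)]
        have ht1 : (k - 1).toNat = k.toNat - 1 := by omega
        have ht2 : (k - 2).toNat = k.toNat - 2 := by omega
        have hl1 : 1 ≤ k.toNat := by omega
        have hl2 : 2 ≤ k.toNat := by omega
        simp [ht1, ht2, hl1, hl2]

lemma coeffZ_pow_eq_tri : ∀ (n : ℕ) (k : ℤ),
    coeffZ ((1 + X + X ^ 2 : ℤ[X]) ^ n) k = tri n k
  | 0, k => by
    unfold coeffZ tri
    rcases lt_or_ge k 0 with h | h
    · rw [if_pos h, if_neg (by omega)]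
    · rw [if_neg (not_lt.mpr h)]
      simp only [pow_zero, coeff_one]
      by_cases hk0 : k = 0
      · simp [hk0]
      · rw [if_neg (by omega), if_neg hk0]
  | n + 1, k => by
    rcases lt_or_ge k 0 with h | h
    · rw [show coeffZ ((1 + X + X ^ 2 : ℤ[X]) ^ (n + 1)) k = 0 from if_pos h,
        tri_neg (n + 1) k h]
    · rw [pow_succ, coeffZ_mul_p _ k h]
      show _ = tri n (k - 2) + tri n (k - 1) + tri n k
      rw [coeffZ_pow_eq_tri n k, coeffZ_pow_eq_tri n (k - 1), coeffZ_pow_eq_tri n (k - 2)]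
      ring

lemma motzkin_eq_tri_sub : ∀ (n : ℕ) (k : ℤ), k ≤ n + 1 →
    motzkinT n k = tri n k - tri n (k - 2)
  | 0, k, hk => by
    unfold motzkinT tri
    by_cases h0 : k = 0
    · subst h0; norm_num
    · rw [if_neg h0, if_neg (show ¬(k - 2 = 0) by omega)]
      ring
  | n + 1, k, hk => by
    rcases lt_or_ge k 0 with h | h
    · rw [show motzkinT (n + 1) k = 0 by unfold motzkinT; rw [if_pos (Or.inl h)],
        tri_neg (n + 1) k h, tri_neg (n + 1) (k - 2) (by omega)]
      ring
    rcases eq_or_lt_of_le h with h0 | hpos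
    · rw [show motzkinT (n + 1) k = 1 by
        unfold motzkinT; rw [if_neg (by omega), if_pos h0.symm]]
      rw [← h0, tri_zero (n + 1), tri_neg (n + 1) (0 - 2) (by omega)]
      ring
    rcases lt_or_ge ((n : ℤ) + 1) k with hbig | hle
    · -- k = n + 2
      have hk2 : k = (n : ℤ) + 2 := by omega
      rw [show motzkinT (n + 1) k = 0 by unfold motzkinT; rw [if_pos (Or.inr hbig)]]
      have hs := tri_symm (n + 1) k
      have : (2 * ((n : ℤ) + 1) - k) = k - 2 := by omega
      push_cast at hs
      rw [this] at hs
      omega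
    · rw [show motzkinT (n + 1) k
          = motzkinT n (k - 2) + motzkinT n (k - 1) + motzkinT n k by
        rw [motzkinT]; rw [if_neg (by omega), if_neg (by omega)]]
      rw [motzkin_eq_tri_sub n (k - 2) (by omega), motzkin_eq_tri_sub n (k - 1) (by omega),
        motzkin_eq_tri_sub n k (by omega)]
      show _ = (tri n (k - 2) + tri n (k - 1) + tri n k)
        - (tri n (k - 2 - 2) + tri n (k - 2 - 1) + tri n (k - 2))
      ring

theorem motzkin_eq_coeff_difference_special (n : ℕ) (hn : 1 ≤ n) :
    motzkinT (2 * n) (2 * (n : ℤ) - 1) =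
      coeffZ ((1 + X + X ^ 2 : ℤ[X]) ^ (2 * n)) (2 * (n : ℤ) - 1) -
        coeffZ ((1 + X + X ^ 2 : ℤ[X]) ^ (2 * n)) (2 * (n : ℤ) - 3) := by
  have h := motzkin_eq_tri_sub (2 * n) (2 * (n : ℤ) - 1) (by push_cast; omega)
  rw [coeffZ_pow_eq_tri, coeffZ_pow_eq_tri,
    show (2 * (n : ℤ) - 3) = (2 * (n : ℤ) - 1) - 2 by ring]
  exact h
end
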